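/- arXiv:2105.05489 — 4 statements merged into one kernel-verified Lean document; each statement's English description precedes it below -/
import Mathlib

section
/- Let A ∈ ℝ^{d_c×d} have full row rank d_c < d, and let Ã ∈ ℝ^{(d−d_c)×d} be a matrix whose rows form a basis of the orthogonal complement of the row space of A (so AÃᵀ = 0). Then for any symmetric positive definite Σ ∈ ℝ^{d×d}, the identity I_d = Σ^{1/2}Aᵀ(AΣAᵀ)^{-1}AΣ^{1/2} + Σ^{-1/2}Ãᵀ(ÃΣ^{-1}Ãᵀ)^{-1}ÃΣ^{-1/2} holds. -/
/-!
With `B = A Σ^{1/2}` and `C = Ã Σ^{-1/2}` the two summands are `Bᵀ (B Bᵀ)⁻¹ B` and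
`Cᵀ (C Cᵀ)⁻¹ C`, and `B Cᵀ = A Ãᵀ = 0`. Hence the stacked square matrix `[B; C]` has the right
inverse `[Bᵀ (B Bᵀ)⁻¹ | Cᵀ (C Cᵀ)⁻¹]`; a one-sided inverse of a square matrix is two-sided, and
multiplying in the other order gives exactly the sum of the two summands.
-/

open Matrix

namespace Matrix

variable {K : Type*} [Field K] {m n p : Type*} [Fintype m] [Fintype n] [Fintype p]

theorem isUnit_of_rank_eq_card [DecidableEq n] {M : Matrix n n K} (h : M.rank = Fintype.card n) : IsUnit M := by
  rw [← mulVec_surjective_iff_isUnit]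
  refine (LinearMap.range_eq_top (f := M.mulVecLin)).mp (Submodule.eq_top_of_finrank_eq ?_)
  rw [← rank, h, Module.finrank_fintype_fun_eq_card]

theorem isUnit_mul_transpose_of_rank_eq_card [DecidableEq m] [LinearOrder K] [IsStrictOrderedRing K]
    {B : Matrix m n K} (hB : B.rank = Fintype.card m) : IsUnit (B * Bᵀ) :=
  isUnit_of_rank_eq_card (by rw [rank_self_mul_transpose, hB])

theorem transpose_mul_inv_mul_add_transpose_mul_inv_mul_eq_one
    [DecidableEq m] [DecidableEq n] [DecidableEq p]
    (hcard : Fintype.card m + Fintype.card p = Fintype.card n)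
    {B : Matrix m n K} {C : Matrix p n K} (hBC : B * Cᵀ = 0)
    (hB : IsUnit (B * Bᵀ)) (hC : IsUnit (C * Cᵀ)) :
    Bᵀ * (B * Bᵀ)⁻¹ * B + Cᵀ * (C * Cᵀ)⁻¹ * C = 1 := by
  have hCB : C * Bᵀ = 0 := by simpa using congrArg transpose hBC
  have hright : fromRows B C * fromCols (Bᵀ * (B * Bᵀ)⁻¹) (Cᵀ * (C * Cᵀ)⁻¹) = 1 := by
    rw [fromRows_mul_fromCols, ← fromBlocks_one]
    simp only [← Matrix.mul_assoc, hBC, hCB, Matrix.zero_mul,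
      mul_nonsing_inv _ ((isUnit_iff_isUnit_det _).mp hB),
      mul_nonsing_inv _ ((isUnit_iff_isUnit_det _).mp hC)]
  have e : n ≃ m ⊕ p := Fintype.equivOfCardEq (by rw [Fintype.card_sum, hcard])
  rw [← (fromCols_mul_fromRows_eq_one_comm e _ _ _ _).mpr hright, fromCols_mul_fromRows]

end Matrix

theorem partition_of_unity_general {d dc : ℕ} (hdc : dc < d)
    (A : Matrix (Fin dc) (Fin d) ℝ) (hA : A.rank = dc)
    (At : Matrix (Fin (d - dc)) (Fin d) ℝ)
    (hAAt : A * Atᵀ = 0) (hAt : At.rank = d - dc)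
    (Sg : Matrix (Fin d) (Fin d) ℝ)
    (S : Matrix (Fin d) (Fin d) ℝ) (hS : S.PosDef) (hSS : S * S = Sg) :
    (1 : Matrix (Fin d) (Fin d) ℝ) =
      S * Aᵀ * (A * Sg * Aᵀ)⁻¹ * A * S +
        S⁻¹ * Atᵀ * (At * Sg⁻¹ * Atᵀ)⁻¹ * At * S⁻¹ := by
  have hSdet : IsUnit S.det := (isUnit_iff_isUnit_det S).mp hS.isUnit
  have hST : Sᵀ = S := hS.isHermitian
  have hSinvT : (S⁻¹)ᵀ = S⁻¹ := by rw [transpose_nonsing_inv, hST]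
  have hgram {k : ℕ} {M : Matrix (Fin k) (Fin d) ℝ} {T : Matrix (Fin d) (Fin d) ℝ}
      (hM : M.rank = k) (hT : IsUnit T.det) : IsUnit (M * T * (M * T)ᵀ) :=
    isUnit_mul_transpose_of_rank_eq_card (by rw [rank_mul_eq_left_of_isUnit_det _ _ hT, hM,
      Fintype.card_fin])
  have hsum := transpose_mul_inv_mul_add_transpose_mul_inv_mul_eq_one
    (by simp only [Fintype.card_fin]; omega) (B := A * S) (C := At * S⁻¹)
    (by rw [transpose_mul, hSinvT, Matrix.mul_assoc, ← Matrix.mul_assoc S, mul_nonsing_inv _ hSdet,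
      Matrix.one_mul, hAAt])
    (hgram hA hSdet) (hgram hAt (isUnit_nonsing_inv_det S hSdet))
  rw [← hsum, ← hSS, Matrix.mul_inv_rev]
  simp only [transpose_mul, hST, hSinvT, Matrix.mul_assoc]

/-- Partition-of-unity identity: for `A` of full row rank `dc < d`, `At` whose rows
form a basis of the orthogonal complement of the row space of `A` (so `A * Atᵀ = 0`
and `At.rank = d - dc`), and `Sg` symmetric positive definite with symmetric positive
definite square root `S` (i.e. `S.PosDef` and `S * S = Sg`),
`I = Σ^{1/2} Aᵀ (A Σ Aᵀ)⁻¹ A Σ^{1/2} + Σ^{-1/2} Ãᵀ (Ã Σ⁻¹ Ãᵀ)⁻¹ Ã Σ^{-1/2}`. -/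
theorem partition_of_unity {d dc : ℕ} (hdc : dc < d)
    (A : Matrix (Fin dc) (Fin d) ℝ) (hA : A.rank = dc)
    (At : Matrix (Fin (d - dc)) (Fin d) ℝ)
    (hAAt : A * Atᵀ = 0) (hAt : At.rank = d - dc)
    (Sg : Matrix (Fin d) (Fin d) ℝ) (hSg : Sg.PosDef)
    (S : Matrix (Fin d) (Fin d) ℝ) (hS : S.PosDef) (hSS : S * S = Sg) :
    (1 : Matrix (Fin d) (Fin d) ℝ) =
      S * Aᵀ * (A * Sg * Aᵀ)⁻¹ * A * S +
        S⁻¹ * Atᵀ * (At * Sg⁻¹ * Atᵀ)⁻¹ * At * S⁻¹ :=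
  partition_of_unity_general hdc A hA At hAAt hAt Sg S hS hSS
end

section
/- Let A ∈ ℝ^{d_c×d} have full row rank, Ã ∈ ℝ^{(d−d_c)×d} have rows forming a basis of the orthogonal complement of the row space of A, and Σ ∈ ℝ^{d×d} be symmetric positive definite. Then the d×d matrix Ω whose block rows are (AΣAᵀ)^{-1/2}AΣ^{1/2} and (ÃΣ^{-1}Ãᵀ)^{-1/2}ÃΣ^{-1/2} is orthogonal, i.e. ΩΩᵀ = ΩᵀΩ = I_d. -/
open Matrix

/-- The matrix `Ω` with block rows `(AΣAᵀ)^{-1/2} A Σ^{1/2}` and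
`(ÃΣ⁻¹Ãᵀ)^{-1/2} Ã Σ^{-1/2}` is orthogonal.  Here `S` is the symmetric positive
definite square root of `Sg`, `R₁` that of `A * Sg * Aᵀ`, and `R₂` that of
`At * Sg⁻¹ * Atᵀ`; `A` has full row rank and the rows of `At` form a basis of the
orthogonal complement of the row space of `A`. -/
theorem block_rows_orthogonal {d dc : ℕ} (hdc : dc < d)
    (A : Matrix (Fin dc) (Fin d) ℝ) (hA : A.rank = dc)
    (At : Matrix (Fin (d - dc)) (Fin d) ℝ)
    (hAAt : A * Atᵀ = 0) (hAt : At.rank = d - dc)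
    (Sg : Matrix (Fin d) (Fin d) ℝ) (hSg : Sg.PosDef)
    (S : Matrix (Fin d) (Fin d) ℝ) (hS : S.PosDef) (hSS : S * S = Sg)
    (R₁ : Matrix (Fin dc) (Fin dc) ℝ) (hR₁ : R₁.PosDef) (hR₁sq : R₁ * R₁ = A * Sg * Aᵀ)
    (R₂ : Matrix (Fin (d - dc)) (Fin (d - dc)) ℝ) (hR₂ : R₂.PosDef)
    (hR₂sq : R₂ * R₂ = At * Sg⁻¹ * Atᵀ) :
    Matrix.fromRows (R₁⁻¹ * A * S) (R₂⁻¹ * At * S⁻¹) *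
        (Matrix.fromRows (R₁⁻¹ * A * S) (R₂⁻¹ * At * S⁻¹))ᵀ = 1 ∧
      (Matrix.fromRows (R₁⁻¹ * A * S) (R₂⁻¹ * At * S⁻¹))ᵀ *
        Matrix.fromRows (R₁⁻¹ * A * S) (R₂⁻¹ * At * S⁻¹) = 1 := by
  have hSsymm : Sᵀ = S := hS.isHermitian.eq
  have hR₁symm : R₁ᵀ = R₁ := hR₁.isHermitian.eq
  have hR₂symm : R₂ᵀ = R₂ := hR₂.isHermitian.eq
  have hSu : IsUnit S.det := isUnit_iff_ne_zero.2 (ne_of_gt hS.det_pos)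
  have hR₁u : IsUnit R₁.det := isUnit_iff_ne_zero.2 (ne_of_gt hR₁.det_pos)
  have hR₂u : IsUnit R₂.det := isUnit_iff_ne_zero.2 (ne_of_gt hR₂.det_pos)
  have hR₁invsymm : (R₁⁻¹)ᵀ = R₁⁻¹ := by rw [transpose_nonsing_inv, hR₁symm]
  have hR₂invsymm : (R₂⁻¹)ᵀ = R₂⁻¹ := by rw [transpose_nonsing_inv, hR₂symm]
  have hSinvsymm : (S⁻¹)ᵀ = S⁻¹ := by rw [transpose_nonsing_inv, hSsymm]
  have hSginv : Sg⁻¹ = S⁻¹ * S⁻¹ := by rw [← hSS, Matrix.mul_inv_rev]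
  -- block computations
  have h11 : (R₁⁻¹ * A * S) * (R₁⁻¹ * A * S)ᵀ = 1 := by
    rw [transpose_mul, transpose_mul, hSsymm, hR₁invsymm]
    calc R₁⁻¹ * A * S * (S * (Aᵀ * R₁⁻¹))
        = R₁⁻¹ * (A * (S * S) * Aᵀ) * R₁⁻¹ := by simp only [Matrix.mul_assoc]
      _ = 1 := by
          rw [hSS, ← hR₁sq, ← Matrix.mul_assoc, Matrix.nonsing_inv_mul _ hR₁u,
            Matrix.one_mul, Matrix.mul_nonsing_inv _ hR₁u]
  have h22 : (R₂⁻¹ * At * S⁻¹) * (R₂⁻¹ * At * S⁻¹)ᵀ = 1 := by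
    rw [transpose_mul, transpose_mul, hSinvsymm, hR₂invsymm]
    calc R₂⁻¹ * At * S⁻¹ * (S⁻¹ * (Atᵀ * R₂⁻¹))
        = R₂⁻¹ * (At * (S⁻¹ * S⁻¹) * Atᵀ) * R₂⁻¹ := by simp only [Matrix.mul_assoc]
      _ = 1 := by
          rw [← hSginv, ← hR₂sq, ← Matrix.mul_assoc, Matrix.nonsing_inv_mul _ hR₂u,
            Matrix.one_mul, Matrix.mul_nonsing_inv _ hR₂u]
  have h12 : (R₁⁻¹ * A * S) * (R₂⁻¹ * At * S⁻¹)ᵀ = 0 := by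
    rw [transpose_mul, transpose_mul, hSinvsymm, hR₂invsymm]
    calc R₁⁻¹ * A * S * (S⁻¹ * (Atᵀ * R₂⁻¹))
        = R₁⁻¹ * A * (S * S⁻¹) * Atᵀ * R₂⁻¹ := by simp only [Matrix.mul_assoc]
      _ = 0 := by
          rw [Matrix.mul_nonsing_inv _ hSu, Matrix.mul_one, Matrix.mul_assoc R₁⁻¹ A, hAAt,
            Matrix.mul_zero, Matrix.zero_mul]
  have h21 : (R₂⁻¹ * At * S⁻¹) * (R₁⁻¹ * A * S)ᵀ = 0 := by
    have := congrArg Matrix.transpose h12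
    rwa [transpose_mul, transpose_transpose, transpose_zero] at this
  have key : Matrix.fromRows (R₁⁻¹ * A * S) (R₂⁻¹ * At * S⁻¹) *
      (Matrix.fromRows (R₁⁻¹ * A * S) (R₂⁻¹ * At * S⁻¹))ᵀ = 1 := by
    rw [transpose_fromRows, fromRows_mul_fromCols, h11, h22, h12, h21, fromBlocks_one]
  refine ⟨key, ?_⟩
  have e : (Fin dc ⊕ Fin (d - dc)) ≃ Fin d :=
    (Equiv.sumCongr (Equiv.refl _) (Equiv.refl _)).trans
      (finSumFinEquiv.trans (finCongr (Nat.add_sub_cancel' hdc.le)))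
  exact (Matrix.mul_eq_one_comm_of_equiv e.symm).mpr key
end

section
/- Let A ∈ ℝ^{d_c×d} have full row rank, Ã have rows spanning the orthogonal complement of the row space of A, and Σ be symmetric positive definite. Then Σ − ΣAᵀ(AΣAᵀ)^{-1}AΣ = Ãᵀ(ÃΣ^{-1}Ãᵀ)^{-1}Ã. -/
/-!
Both sides annihilate the columns of `Aᵀ` and send `Σ⁻¹ Ãᵀ` to `Ãᵀ`. The `d` columns of `Aᵀ`
and `Σ⁻¹ Ãᵀ` are linearly independent, because `Ã` kills `Aᵀ` while `Ã Σ⁻¹ Ãᵀ` is positive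
definite; so they form a basis of `ℝ^d`, on which the two sides agree.
-/

open Matrix

namespace Matrix

section Field

variable {K : Type*} [Field K] {l m n k : Type*} [Fintype m] [Fintype n] [Fintype k]

theorem vecMul_injective_of_rank_eq {M : Matrix m n K} (h : M.rank = Fintype.card m) :
    Function.Injective M.vecMul := by
  rw [vecMul_injective_iff, linearIndependent_iff_card_eq_finrank_span, Set.finrank,
    ← rank_eq_finrank_span_row, h]

theorem transpose_mulVec_injective_of_rank_eq {M : Matrix m n K}
    (h : M.rank = Fintype.card m) : Function.Injective Mᵀ.mulVec :=
  fun _ _ hxy => vecMul_injective_of_rank_eq h (by simpa only [mulVec_transpose] using hxy)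

theorem fromCols_mulVec_injective {B : Matrix n m K} {C : Matrix n k K} {D : Matrix l n K}
    (hB : Function.Injective B.mulVec) (hDC : Function.Injective (D * C).mulVec)
    (hDB : D * B = 0) : Function.Injective (fromCols B C).mulVec := by
  rw [← coe_mulVecLin, ← LinearMap.ker_eq_bot, LinearMap.ker_eq_bot']
  intro v hv
  rw [coe_mulVecLin, fromCols_mulVec] at hv
  have hvr : v ∘ Sum.inr = 0 := hDC <| by
    simpa [mulVec_add, mulVec_mulVec, hDB] using congrArg (D *ᵥ ·) hv
  have hvl : v ∘ Sum.inl = 0 := hB <| by simpa [hvr] using hv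
  ext (i | i)
  · exact congrFun hvl i
  · exact congrFun hvr i

theorem eq_zero_of_mul_fromCols_eq_zero {X : Matrix l n K} {B : Matrix n m K}
    {C : Matrix n k K} (hcard : Fintype.card m + Fintype.card k = Fintype.card n)
    (hBC : Function.Injective (fromCols B C).mulVec) (hXB : X * B = 0) (hXC : X * C = 0) :
    X = 0 := by
  have hsurj : Function.Surjective (fromCols B C).mulVec := by
    rw [← coe_mulVecLin, ← LinearMap.injective_iff_surjective_of_finrank_eq_finrank]
    · exact hBC
    · simp [hcard]
  have hXBC : X * fromCols B C = 0 := by rw [mul_fromCols, hXB, hXC, fromCols_zero]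
  refine ext_iff_mulVec.mpr fun v => ?_
  obtain ⟨w, rfl⟩ := hsurj v
  rw [mulVec_mulVec, hXBC, zero_mulVec, zero_mulVec]

end Field

theorem PosDef.isUnit_det_mul_mul_transpose {m n : Type*} [Fintype m] [Fintype n]
    [DecidableEq m] {S : Matrix n n ℝ} (hS : S.PosDef) {B : Matrix m n ℝ}
    (hB : B.rank = Fintype.card m) : IsUnit (B * S * Bᵀ).det :=
  (isUnit_iff_isUnit_det _).mp <| by
    simpa using (hS.mul_mul_conjTranspose_same (vecMul_injective_of_rank_eq hB)).isUnit

section CommRing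

variable {R : Type*} [CommRing R] {l m n : Type*} [Fintype m] [Fintype n] [DecidableEq m]

theorem mul_nonsing_inv_mul_mul_transpose_cancel (X : Matrix l m R) (B : Matrix m n R)
    (T : Matrix n n R) (h : IsUnit (B * T * Bᵀ).det) : X * (B * T * Bᵀ)⁻¹ * B * T * Bᵀ = X := by
  rw [Matrix.mul_assoc _ T, Matrix.mul_assoc _ B, ← Matrix.mul_assoc B,
    nonsing_inv_mul_cancel_right _ _ h]

variable (S : Matrix n n R) (B : Matrix m n R)

theorem sub_mul_nonsing_inv_mul_mul_transpose_eq_zero (h : IsUnit (B * S * Bᵀ).det) :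
    (S - S * Bᵀ * (B * S * Bᵀ)⁻¹ * B * S) * Bᵀ = 0 := by
  rw [Matrix.sub_mul, mul_nonsing_inv_mul_mul_transpose_cancel _ _ _ h, sub_self]

theorem sub_mul_nonsing_inv_mul_mul_inv_mul_transpose [DecidableEq n] {C : Matrix l n R}
    (hS : IsUnit S.det) (hBC : B * Cᵀ = 0) :
    (S - S * Bᵀ * (B * S * Bᵀ)⁻¹ * B * S) * (S⁻¹ * Cᵀ) = Cᵀ := by
  simp only [Matrix.sub_mul, Matrix.mul_assoc, mul_nonsing_inv_cancel_left _ _ hS, hBC,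
    Matrix.mul_zero, sub_zero]

end CommRing

end Matrix

theorem conditional_covariance_eq_general {d dc : ℕ}
    (A : Matrix (Fin dc) (Fin d) ℝ) (hA : A.rank = dc)
    (At : Matrix (Fin (d - dc)) (Fin d) ℝ)
    (hAAt : A * Atᵀ = 0) (hAt : At.rank = d - dc)
    (Sg : Matrix (Fin d) (Fin d) ℝ) (hSg : Sg.PosDef) :
    Sg - Sg * Aᵀ * (A * Sg * Aᵀ)⁻¹ * A * Sg = Atᵀ * (At * Sg⁻¹ * Atᵀ)⁻¹ * At := by
  have hdc : dc ≤ d := hA ▸ A.rank_le_width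
  replace hA : A.rank = Fintype.card (Fin dc) := by rw [hA, Fintype.card_fin]
  replace hAt : At.rank = Fintype.card (Fin (d - dc)) := by rw [hAt, Fintype.card_fin]
  have hASA : IsUnit (A * Sg * Aᵀ).det := hSg.isUnit_det_mul_mul_transpose hA
  have hAtSAt : IsUnit (At * Sg⁻¹ * Atᵀ).det := hSg.inv.isUnit_det_mul_mul_transpose hAt
  have hSdet : IsUnit Sg.det := (isUnit_iff_isUnit_det _).mp hSg.isUnit
  have hAtA : At * Aᵀ = 0 := by simpa using congrArg transpose hAAt
  rw [← sub_eq_zero]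
  refine eq_zero_of_mul_fromCols_eq_zero (B := Aᵀ) (C := Sg⁻¹ * Atᵀ)
    (by simp only [Fintype.card_fin]; omega)
    (fromCols_mulVec_injective (transpose_mulVec_injective_of_rank_eq hA) ?_ hAtA) ?_ ?_
  · rw [← Matrix.mul_assoc, mulVec_injective_iff_isUnit, isUnit_iff_isUnit_det]
    exact hAtSAt
  · rw [Matrix.sub_mul, sub_mul_nonsing_inv_mul_mul_transpose_eq_zero _ _ hASA]
    simp [Matrix.mul_assoc, hAtA]
  · rw [Matrix.sub_mul, sub_mul_nonsing_inv_mul_mul_inv_mul_transpose _ _ hSdet hAAt,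
      ← Matrix.mul_assoc, mul_nonsing_inv_mul_mul_transpose_cancel _ _ _ hAtSAt, sub_self]

/-- `Σ − Σ Aᵀ (A Σ Aᵀ)⁻¹ A Σ = Ãᵀ (Ã Σ⁻¹ Ãᵀ)⁻¹ Ã`, where `A` has full row rank and
the rows of `At` form a basis of the orthogonal complement of the row space of `A`. -/
theorem conditional_covariance_eq {d dc : ℕ} (hdc : dc < d)
    (A : Matrix (Fin dc) (Fin d) ℝ) (hA : A.rank = dc)
    (At : Matrix (Fin (d - dc)) (Fin d) ℝ)
    (hAAt : A * Atᵀ = 0) (hAt : At.rank = d - dc)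
    (Sg : Matrix (Fin d) (Fin d) ℝ) (hSg : Sg.PosDef) :
    Sg - Sg * Aᵀ * (A * Sg * Aᵀ)⁻¹ * A * Sg = Atᵀ * (At * Sg⁻¹ * Atᵀ)⁻¹ * At :=
  conditional_covariance_eq_general A hA At hAAt hAt Sg hSg
end

section
/- With notation as above, set W = Ãᵀ(ÃΣ^{-1}Ãᵀ)^{-1/2} ∈ ℝ^{d×(d−d_c)}. Then WWᵀ = Σ^c, where Σ^c = Σ − ΣAᵀ(AΣAᵀ)^{-1}AΣ. -/
/-!
Put `X = Σ Aᵀ (A Σ Aᵀ)⁻¹ A Σ + Ãᵀ (Ã Σ⁻¹ Ãᵀ)⁻¹ Ã - Σ`. A direct computation gives `A X = 0` and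
`Ã Σ⁻¹ X = 0`. The first equation puts the columns of `X` in `ker A`, which by the rank count
equals the column space of `Ãᵀ`; writing a column as `Ãᵀ c`, the second equation reads
`(Ã Σ⁻¹ Ãᵀ) c = 0`, so `c = 0`. Finally `R` is symmetric, so `W Wᵀ = Ãᵀ (R R)⁻¹ Ã = Ãᵀ (Ã Σ⁻¹ Ãᵀ)⁻¹ Ã`.
-/

open Matrix

namespace Matrix

variable {K : Type*} [Field K] {l m n o p : Type*}

theorem vecMul_injective_of_rank_eq_card [Fintype m] [Fintype n] {A : Matrix m n K}
    (hA : A.rank = Fintype.card m) : Function.Injective A.vecMul := by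
  rw [vecMul_injective_iff, linearIndependent_iff_card_eq_finrank_span, Set.finrank,
    ← rank_eq_finrank_span_row, hA]

theorem ker_mulVecLin_eq_range_of_mul_eq_zero [Fintype m] [Fintype n] {A : Matrix l m K}
    {B : Matrix m n K} (hAB : A * B = 0) (hrank : A.rank + B.rank = Fintype.card m) :
    LinearMap.ker A.mulVecLin = LinearMap.range B.mulVecLin := by
  refine (Submodule.eq_of_le_of_finrank_eq ?_ ?_).symm
  · rw [LinearMap.range_le_ker_iff, ← mulVecLin_mul, hAB, mulVecLin_zero]
  · have := LinearMap.finrank_range_add_finrank_ker A.mulVecLin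
    rw [Module.finrank_fintype_fun_eq_card] at this
    change B.rank = _
    change A.rank + _ = _ at this
    omega

theorem eq_zero_of_mul_eq_zero_of_ker_eq_range [Fintype n] [Fintype o] [Fintype p]
    [DecidableEq p] {A : Matrix l n K} {B : Matrix p n K} {C : Matrix n p K} {X : Matrix n o K}
    (hker : LinearMap.ker A.mulVecLin = LinearMap.range C.mulVecLin) (hBC : IsUnit (B * C).det)
    (hAX : A * X = 0) (hBX : B * X = 0) : X = 0 := by
  rw [ext_iff_mulVec]
  intro v
  have hXv : X *ᵥ v ∈ LinearMap.ker A.mulVecLin := by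
    rw [LinearMap.mem_ker, mulVecLin_apply, mulVec_mulVec, hAX, zero_mulVec]
  obtain ⟨c, hc⟩ := hker ▸ hXv
  rw [mulVecLin_apply] at hc
  have hc0 : c = 0 := mulVec_injective_of_isUnit ((isUnit_iff_isUnit_det _).mpr hBC) <| by
    rw [← mulVec_mulVec, hc, mulVec_mulVec, hBX, zero_mulVec, mulVec_zero]
  rw [← hc, hc0, mulVec_zero, zero_mulVec]

theorem mul_transpose_eq_zero_of_ker_eq_range [Fintype n] [Fintype p] {A : Matrix m n K}
    {C : Matrix p n K} (hker : LinearMap.ker A.mulVecLin = LinearMap.range Cᵀ.mulVecLin) :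
    A * Cᵀ = 0 := by
  rw [ext_iff_mulVec]
  intro v
  rw [← mulVec_mulVec, zero_mulVec]
  exact hker.ge ⟨v, rfl⟩

theorem mul_transpose_inv_mul_add_eq [Fintype m] [Fintype n] [Fintype p] [DecidableEq m]
    [DecidableEq n] [DecidableEq p] {S : Matrix n n K} {A : Matrix m n K} {C : Matrix p n K}
    (hS : IsUnit S.det) (hker : LinearMap.ker A.mulVecLin = LinearMap.range Cᵀ.mulVecLin)
    (hASA : IsUnit (A * S * Aᵀ).det) (hCSC : IsUnit (C * S⁻¹ * Cᵀ).det) :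
    S * Aᵀ * (A * S * Aᵀ)⁻¹ * A * S + Cᵀ * (C * S⁻¹ * Cᵀ)⁻¹ * C = S := by
  have hACt : A * Cᵀ = 0 := mul_transpose_eq_zero_of_ker_eq_range hker
  have hCAt : C * Aᵀ = 0 := by rw [← transpose_transpose C, ← transpose_mul, hACt, transpose_zero]
  rw [← sub_eq_zero]
  refine eq_zero_of_mul_eq_zero_of_ker_eq_range hker (B := C * S⁻¹) hCSC ?_ ?_
  · calc A * (S * Aᵀ * (A * S * Aᵀ)⁻¹ * A * S + Cᵀ * (C * S⁻¹ * Cᵀ)⁻¹ * C - S)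
        = (A * S * Aᵀ) * (A * S * Aᵀ)⁻¹ * (A * S)
          + (A * Cᵀ) * ((C * S⁻¹ * Cᵀ)⁻¹ * C) - A * S := by
          simp only [Matrix.mul_add, Matrix.mul_sub, Matrix.mul_assoc]
      _ = 0 := by rw [mul_nonsing_inv _ hASA, hACt]; simp
  · calc C * S⁻¹ * (S * Aᵀ * (A * S * Aᵀ)⁻¹ * A * S + Cᵀ * (C * S⁻¹ * Cᵀ)⁻¹ * C - S)
        = C * (S⁻¹ * S) * Aᵀ * ((A * S * Aᵀ)⁻¹ * A * S)
          + (C * S⁻¹ * Cᵀ) * (C * S⁻¹ * Cᵀ)⁻¹ * C - C * (S⁻¹ * S) := by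
          simp only [Matrix.mul_add, Matrix.mul_sub, Matrix.mul_assoc]
      _ = 0 := by rw [nonsing_inv_mul _ hS, mul_nonsing_inv _ hCSC, Matrix.mul_one, hCAt]; simp

theorem IsSymm.mul_inv_mul_transpose_mul_inv [Fintype n] [DecidableEq n] {R : Matrix n n K}
    (hR : R.IsSymm) (B : Matrix m n K) : B * R⁻¹ * (B * R⁻¹)ᵀ = B * (R * R)⁻¹ * Bᵀ := by
  rw [transpose_mul, transpose_nonsing_inv, hR.eq, mul_inv_rev]
  simp only [Matrix.mul_assoc]

end Matrix

theorem W_mul_W_transpose_general {d dc : ℕ}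
    (A : Matrix (Fin dc) (Fin d) ℝ) (hA : A.rank = dc)
    (At : Matrix (Fin (d - dc)) (Fin d) ℝ)
    (hAAt : A * Atᵀ = 0) (hAt : At.rank = d - dc)
    (Sg : Matrix (Fin d) (Fin d) ℝ) (hSg : Sg.PosDef)
    (R : Matrix (Fin (d - dc)) (Fin (d - dc)) ℝ) (hR : R.PosDef)
    (hRsq : R * R = At * Sg⁻¹ * Atᵀ) :
    (Atᵀ * R⁻¹) * (Atᵀ * R⁻¹)ᵀ = Sg - Sg * Aᵀ * (A * Sg * Aᵀ)⁻¹ * A * Sg := by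
  have hker : LinearMap.ker A.mulVecLin = LinearMap.range Atᵀ.mulVecLin := by
    refine ker_mulVecLin_eq_range_of_mul_eq_zero hAAt ?_
    have := A.rank_le_card_width
    simp only [rank_transpose, hA, hAt, Fintype.card_fin] at this ⊢
    omega
  have hASA : (A * Sg * Aᵀ).PosDef := by
    simpa using hSg.mul_mul_conjTranspose_same
      (vecMul_injective_of_rank_eq_card (by rw [hA, Fintype.card_fin]))
  have hRR : IsUnit (At * Sg⁻¹ * Atᵀ).det := by
    rw [← hRsq, det_mul]
    exact (mul_pos hR.det_pos hR.det_pos).ne'.isUnit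
  rw [(isHermitian_iff_isSymm.mp hR.isHermitian).mul_inv_mul_transpose_mul_inv, hRsq]
  exact eq_sub_of_add_eq' <| mul_transpose_inv_mul_add_eq hSg.det_pos.ne'.isUnit hker
    hASA.det_pos.ne'.isUnit hRR

/-- With `W = Ãᵀ (Ã Σ⁻¹ Ãᵀ)^{-1/2}` (where `R` is the symmetric positive definite
square root of `Ã Σ⁻¹ Ãᵀ`), we have `W Wᵀ = Σ^c = Σ − Σ Aᵀ (A Σ Aᵀ)⁻¹ A Σ`. -/
theorem W_mul_W_transpose {d dc : ℕ} (hdc : dc < d)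
    (A : Matrix (Fin dc) (Fin d) ℝ) (hA : A.rank = dc)
    (At : Matrix (Fin (d - dc)) (Fin d) ℝ)
    (hAAt : A * Atᵀ = 0) (hAt : At.rank = d - dc)
    (Sg : Matrix (Fin d) (Fin d) ℝ) (hSg : Sg.PosDef)
    (R : Matrix (Fin (d - dc)) (Fin (d - dc)) ℝ) (hR : R.PosDef)
    (hRsq : R * R = At * Sg⁻¹ * Atᵀ) :
    (Atᵀ * R⁻¹) * (Atᵀ * R⁻¹)ᵀ = Sg - Sg * Aᵀ * (A * Sg * Aᵀ)⁻¹ * A * Sg :=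
  W_mul_W_transpose_general A hA At hAAt hAt Sg hSg R hR hRsq
end
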